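/- arXiv:1108.2526 — 2 statements merged into one kernel-verified Lean document; each statement's English description precedes it below -/
import Mathlib

section
/- Let α be a finite type, y a permutation of α, and q a natural number such that y^q is conjugate to y in the symmetric group of α. Let k be the number of distinct sizes of orbits of the cyclic group generated by y on α. Then ∑_{x : x·y·x⁻¹ = y^q} #{⟨y⟩-orbits O : x maps O onto O} = k · #{x ∈ Sym(α) : x·y·x⁻¹ = y^q}. In other words, the average number of ⟨y⟩-orbits preserved setwise by a uniformly random solution x of x·y·x⁻¹ = y^q equals the number of distinct ⟨y⟩-orbit sizes. -/
/-!
A solution `x` of `x * y * x⁻¹ = y ^ q` normalises `⟨y⟩`, because `y ^ q` has the same order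
as `y` and hence generates `⟨y⟩`; so `x` permutes the `⟨y⟩`-orbits, preserving their sizes.
The solutions are stable under right multiplication by the centraliser of `y`, and the
centraliser acts transitively on the orbits of any given size (exchange two orbits along `y`).
Fix an orbit `ω₀` of size `d`. For each orbit `ω` of size `d`, right multiplication by some
`c` with `c ω₀ = ω` matches the solutions preserving `ω` with those sending `ω₀` to `ω`; since
every solution sends `ω₀` to exactly one orbit of size `d`, the orbits of size `d` contribute
exactly the number of solutions to the sum.
-/

open Equiv MulAction Subgroup Finset
open scoped Pointwise

theorem MulAction.smul_orbit_of_mem_normalizer {G X : Type*} [Group G] [MulAction G X]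
    {H : Subgroup G} {g : G} (hg : g ∈ normalizer H) (a : X) :
    g • orbit H a = orbit H (g • a) := by
  ext b
  simp only [Set.mem_smul_set_iff_inv_smul_mem, mem_orbit_iff, Subtype.exists, Subgroup.mk_smul]
  constructor
  · rintro ⟨h, hh, hb⟩
    refine ⟨g * h * g⁻¹, (mem_normalizer_iff.1 hg h).1 hh, ?_⟩
    rw [smul_smul, inv_mul_cancel_right, mul_smul, hb, smul_inv_smul]
  · rintro ⟨h, hh, rfl⟩
    refine ⟨g⁻¹ * h * g, (mem_normalizer_iff''.1 hg h).1 hh, ?_⟩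
    rw [mul_smul, mul_smul]

theorem MulAction.card_orbit_zpowers {G X : Type*} [Group G] [MulAction G X] (g : G) (a : X) :
    Nat.card (orbit (zpowers g) a) = period g a := by
  rw [Nat.card_congr (orbitZPowersEquiv g a), Nat.card_zmod, period_eq_minimalPeriod]

namespace Subgroup

variable {G : Type*} [Group G]

theorem mem_normalizer_zpowers_iff {x y : G} :
    x ∈ normalizer (zpowers y) ↔ zpowers (x * y * x⁻¹) = zpowers y := by
  rw [mem_normalizer_iff_map_conj_eq, MonoidHom.map_zpowers]
  rfl

theorem zpowers_pow_eq_of_conj_eq_pow {x y : G} (hy : IsOfFinOrder y) {q : ℕ}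
    (h : x * y * x⁻¹ = y ^ q) : zpowers (y ^ q) = zpowers y := by
  have : Finite (zpowers y) := hy.finite_zpowers.to_subtype
  refine eq_of_le_of_card_ge (zpowers_le.2 (pow_mem (mem_zpowers y) q)) ?_
  rw [Nat.card_zpowers, Nat.card_zpowers, ← h, ← MulAut.conj_apply, MulEquiv.orderOf_eq]

end Subgroup

namespace Equiv.Perm

variable {α : Type*}

theorem zpow_apply_eq_zpow_apply_iff (y : Perm α) (a : α) (m n : ℤ) :
    (y ^ m) a = (y ^ n) a ↔ (period y a : ℤ) ∣ m - n := by
  rw [← zpow_smul_eq_iff_period_dvd, ← add_sub_cancel n m, zpow_add, mul_apply,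
    add_sub_cancel_left, EmbeddingLike.apply_eq_iff_eq]
  rfl

theorem zpow_apply_eq_zpow_apply_iff_of_period_eq {y : Perm α} {a b : α}
    (h : period y a = period y b) {m n : ℤ} :
    (y ^ m) a = (y ^ n) a ↔ (y ^ m) b = (y ^ n) b := by
  rw [zpow_apply_eq_zpow_apply_iff, zpow_apply_eq_zpow_apply_iff, h]

open scoped Classical in
noncomputable def orbitTransport (y : Perm α) (a b z : α) : α :=
  if h : y.SameCycle a z then (y ^ h.choose) b else z

open scoped Classical in
noncomputable def orbitSwap (y : Perm α) (a b z : α) : α :=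
  if y.SameCycle a z then orbitTransport y a b z else orbitTransport y b a z

section OrbitSwap

variable {y : Perm α} {a b : α}

theorem orbitTransport_zpow_apply (h : period y a = period y b) (n : ℤ) :
    orbitTransport y a b ((y ^ n) a) = (y ^ n) b := by
  have hn : y.SameCycle a ((y ^ n) a) := ⟨n, rfl⟩
  rw [orbitTransport, dif_pos hn]
  exact (zpow_apply_eq_zpow_apply_iff_of_period_eq h).1 hn.choose_spec

theorem orbitSwap_zpow_apply_left (h : period y a = period y b) (n : ℤ) :
    orbitSwap y a b ((y ^ n) a) = (y ^ n) b := by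
  rw [orbitSwap, if_pos ⟨n, rfl⟩, orbitTransport_zpow_apply h]

theorem orbitSwap_zpow_apply_right (h : period y a = period y b) (hab : ¬y.SameCycle a b)
    (n : ℤ) : orbitSwap y a b ((y ^ n) b) = (y ^ n) a := by
  rw [orbitSwap, if_neg (mt sameCycle_zpow_right.1 hab), orbitTransport_zpow_apply h.symm]

theorem orbitSwap_of_not_sameCycle {z : α} (ha : ¬y.SameCycle a z) (hb : ¬y.SameCycle b z) :
    orbitSwap y a b z = z := by
  rw [orbitSwap, if_neg ha, orbitTransport, dif_neg hb]

theorem orbitSwap_cases (h : period y a = period y b) (hab : ¬y.SameCycle a b)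
    (P : α → α → Prop) (hleft : ∀ n : ℤ, P ((y ^ n) a) ((y ^ n) b))
    (hright : ∀ n : ℤ, P ((y ^ n) b) ((y ^ n) a))
    (hout : ∀ z, ¬y.SameCycle a z → ¬y.SameCycle b z → P z z) (z : α) :
    P z (orbitSwap y a b z) := by
  by_cases ha : y.SameCycle a z
  · obtain ⟨n, rfl⟩ := ha
    rw [orbitSwap_zpow_apply_left h]
    exact hleft n
  by_cases hb : y.SameCycle b z
  · obtain ⟨n, rfl⟩ := hb
    rw [orbitSwap_zpow_apply_right h hab]
    exact hright n
  rw [orbitSwap_of_not_sameCycle ha hb]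
  exact hout z ha hb

theorem orbitSwap_involutive (h : period y a = period y b) (hab : ¬y.SameCycle a b) :
    Function.Involutive (orbitSwap y a b) :=
  orbitSwap_cases h hab (fun z w => orbitSwap y a b w = z) (orbitSwap_zpow_apply_right h hab)
    (orbitSwap_zpow_apply_left h) fun _ => orbitSwap_of_not_sameCycle

theorem orbitSwap_apply (h : period y a = period y b) (hab : ¬y.SameCycle a b) (z : α) :
    orbitSwap y a b (y z) = y (orbitSwap y a b z) := by
  refine orbitSwap_cases h hab (fun z w => orbitSwap y a b (y z) = y w) (fun n => ?_)
    (fun n => ?_) (fun z ha hb => ?_) z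
  · simp only [← mul_apply, ← zpow_one_add, orbitSwap_zpow_apply_left h]
  · simp only [← mul_apply, ← zpow_one_add, orbitSwap_zpow_apply_right h hab]
  · rw [← sameCycle_apply_right] at ha hb
    exact orbitSwap_of_not_sameCycle ha hb

theorem exists_commute_apply_eq (h : period y a = period y b) :
    ∃ c : Perm α, Commute c y ∧ c a = b := by
  by_cases hab : y.SameCycle a b
  · obtain ⟨n, rfl⟩ := hab
    exact ⟨y ^ n, (Commute.refl y).zpow_left n, rfl⟩
  · refine ⟨(orbitSwap_involutive h hab).toPerm, Equiv.ext (orbitSwap_apply h hab), ?_⟩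
    simpa using orbitSwap_zpow_apply_left h 0

end OrbitSwap

variable {y : Perm α}

local notation "Ω" => orbitRel.Quotient (zpowers y) α

theorem image_orbit_of_mem_normalizer {H : Subgroup (Perm α)} {x : Perm α}
    (hx : x ∈ normalizer H) (a : α) : ⇑x '' orbit H a = orbit H (x a) :=
  smul_orbit_of_mem_normalizer hx a

theorem exists_commute_image_orbit_eq {ω ω' : Ω} (h : Nat.card ω.orbit = Nat.card ω'.orbit) :
    ∃ c : Perm α, Commute c y ∧ ⇑c '' ω.orbit = ω'.orbit := by
  rw [ω.orbit_eq_orbit_out Quotient.out_eq', ω'.orbit_eq_orbit_out Quotient.out_eq',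
    card_orbit_zpowers, card_orbit_zpowers] at *
  obtain ⟨c, hc, hca⟩ := exists_commute_apply_eq h
  refine ⟨c, hc, ?_⟩
  rw [image_orbit_of_mem_normalizer (mem_normalizer_zpowers_iff.2 (by rw [hc.mul_inv_cancel])),
    hca]

section Counting

open scoped Classical

variable {T : Finset (Perm α)}

theorem card_filter_image_orbit_eq_of_card_orbit_eq
    (hT : ∀ x c : Perm α, Commute c y → (x * c ∈ T ↔ x ∈ T))
    {ω₀ ω : Ω} (h : Nat.card ω₀.orbit = Nat.card ω.orbit) :
    (T.filter fun x : Perm α => ⇑x '' ω.orbit = ω.orbit).card =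
      (T.filter fun x : Perm α => ⇑x '' ω₀.orbit = ω.orbit).card := by
  obtain ⟨c, hc, hcω⟩ := exists_commute_image_orbit_eq h
  refine card_equiv (Equiv.mulRight c) fun x => ?_
  simp only [mem_filter, coe_mulRight, hT x c hc, coe_mul, Set.image_comp, hcω]

theorem sum_card_filter_image_orbit_eq_self [Fintype α]
    (hTN : ∀ x ∈ T, x ∈ normalizer (zpowers y))
    (hTC : ∀ x c : Perm α, Commute c y → (x * c ∈ T ↔ x ∈ T)) (ω₀ : Ω) :
    ∑ ω ∈ univ.filter (fun ω : Ω => Nat.card ω.orbit = Nat.card ω₀.orbit),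
      (T.filter fun x : Perm α => ⇑x '' ω.orbit = ω.orbit).card = T.card := by
  let f : Perm α → Ω := fun x => Quotient.mk'' (x ω₀.out)
  have hf : ∀ x ∈ T, ⇑x '' ω₀.orbit = (f x).orbit := fun x hx => by
    rw [orbitRel.Quotient.orbit_mk, ω₀.orbit_eq_orbit_out Quotient.out_eq',
      image_orbit_of_mem_normalizer (hTN x hx)]
  have hmaps :
      Set.MapsTo f T (univ.filter fun ω : Ω => Nat.card ω.orbit = Nat.card ω₀.orbit) :=
    fun x hx => by
      refine mem_filter.2 ⟨mem_univ _, ?_⟩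
      rw [← hf x hx]
      exact Nat.card_image_of_injective x.injective _
  rw [card_eq_sum_card_fiberwise hmaps]
  refine sum_congr rfl fun ω hω => ?_
  rw [card_filter_image_orbit_eq_of_card_orbit_eq hTC (mem_filter.1 hω).2.symm]
  refine congrArg card (filter_congr fun x hx => ?_)
  rw [hf x hx, orbitRel.Quotient.orbit_injective.eq_iff]

theorem sum_card_preserved_orbits_eq [Fintype α]
    (hTN : ∀ x ∈ T, x ∈ normalizer (zpowers y))
    (hTC : ∀ x c : Perm α, Commute c y → (x * c ∈ T ↔ x ∈ T)) :
    ∑ x ∈ T, Nat.card {ω : Ω // ⇑x '' ω.orbit = ω.orbit} =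
      (univ.image fun ω : Ω => Nat.card ω.orbit).card * T.card :=
  calc ∑ x ∈ T, Nat.card {ω : Ω // ⇑x '' ω.orbit = ω.orbit}
      = ∑ x ∈ T, (univ.filter fun ω : Ω => ⇑x '' ω.orbit = ω.orbit).card := by
        simp only [Nat.card_eq_fintype_card, Fintype.card_subtype]
    _ = ∑ ω : Ω, (T.filter fun x : Perm α => ⇑x '' ω.orbit = ω.orbit).card :=
        sum_card_bipartiteAbove_eq_sum_card_bipartiteBelow _
    _ = ∑ d ∈ univ.image fun ω : Ω => Nat.card ω.orbit,
          ∑ ω ∈ univ.filter (fun ω : Ω => Nat.card ω.orbit = d),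
            (T.filter fun x : Perm α => ⇑x '' ω.orbit = ω.orbit).card :=
        (sum_fiberwise_of_maps_to (fun ω _ => mem_image_of_mem _ (mem_univ ω)) _).symm
    _ = ∑ d ∈ univ.image fun ω : Ω => Nat.card ω.orbit, T.card :=
        sum_congr rfl fun d hd => by
          obtain ⟨ω₀, -, rfl⟩ := mem_image.1 hd
          exact sum_card_filter_image_orbit_eq_self hTN hTC ω₀
    _ = _ := by rw [sum_const, smul_eq_mul]

end Counting

end Equiv.Perm

open scoped Classical in
theorem average_preserved_orbits_eq_number_of_distinct_orbit_sizes_general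
    {α : Type*} [Fintype α] (y : Equiv.Perm α) (q : ℕ)
    (k : ℕ)
    (hk : Nat.card (Set.range
      (fun ω : MulAction.orbitRel.Quotient (Subgroup.zpowers y) α =>
        Nat.card ω.orbit)) = k) :
    ∑ x ∈ Finset.univ.filter (fun x : Equiv.Perm α => x * y * x⁻¹ = y ^ q),
        Nat.card {ω : MulAction.orbitRel.Quotient (Subgroup.zpowers y) α //
          (⇑x) '' ω.orbit = ω.orbit} =
      k * (Finset.univ.filter
        (fun x : Equiv.Perm α => x * y * x⁻¹ = y ^ q)).card := by
  rw [← hk, Nat.card_eq_card_toFinset, Set.toFinset_range]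
  refine Perm.sum_card_preserved_orbits_eq (fun x hx => ?_) fun x c hc => ?_
  · have hx : x * y * x⁻¹ = y ^ q := (mem_filter.1 hx).2
    rw [mem_normalizer_zpowers_iff, hx, zpowers_pow_eq_of_conj_eq_pow (isOfFinOrder_of_finite y) hx]
  · have : x * c * y * (x * c)⁻¹ = x * (c * y * c⁻¹) * x⁻¹ := by group
    simp only [mem_filter, mem_univ, true_and, this, hc.mul_inv_cancel]

open scoped Classical in
theorem average_preserved_orbits_eq_number_of_distinct_orbit_sizes
    {α : Type*} [Fintype α] (y : Equiv.Perm α) (q : ℕ)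
    (hconj : IsConj y (y ^ q))
    (k : ℕ)
    (hk : Nat.card (Set.range
      (fun ω : MulAction.orbitRel.Quotient (Subgroup.zpowers y) α =>
        Nat.card ω.orbit)) = k) :
    ∑ x ∈ Finset.univ.filter (fun x : Equiv.Perm α => x * y * x⁻¹ = y ^ q),
        Nat.card {ω : MulAction.orbitRel.Quotient (Subgroup.zpowers y) α //
          (⇑x) '' ω.orbit = ω.orbit} =
      k * (Finset.univ.filter
        (fun x : Equiv.Perm α => x * y * x⁻¹ = y ^ q)).card :=
  average_preserved_orbits_eq_number_of_distinct_orbit_sizes_general y q k hk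
end

section
/- Let α be a finite type, y a permutation of α, and q a natural number coprime to the order of y. Then y^q is conjugate to y in the symmetric group of α; equivalently, y^q has the same cycle type as y. -/
/-! A power `y ^ q` with `q` coprime to `orderOf y` acts on each cycle of `y` as a generator of
that cycle's cyclic group, so it is again a cycle on the same support. Hence `y ^ q` and `y` have
the same cycle type, and permutations of equal cycle type are conjugate. -/

namespace Equiv.Perm

variable {α : Type*} [Fintype α] [DecidableEq α]

theorem IsCycle.cycleType_pow_of_coprime {c : Perm α} (hc : c.IsCycle) {q : ℕ}
    (hq : q.Coprime (orderOf c)) : (c ^ q).cycleType = c.cycleType := by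
  rw [(hc.pow_iff.mpr hq).cycleType, hc.cycleType, support_pow_coprime hq]

theorem cycleType_pow_of_coprime (y : Perm α) {q : ℕ} (hq : q.Coprime (orderOf y)) :
    (y ^ q).cycleType = y.cycleType := by
  induction y using cycle_induction_on with
  | base_one => simp
  | base_cycles c hc => exact hc.cycleType_pow_of_coprime hq
  | induction_disjoint f g hd _ ihf ihg =>
    rw [hd.orderOf] at hq
    have hf : q.Coprime (orderOf f) := hq.coprime_dvd_right (Nat.dvd_lcm_left _ _)
    have hg : q.Coprime (orderOf g) := hq.coprime_dvd_right (Nat.dvd_lcm_right _ _)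
    rw [hd.commute.mul_pow, (hd.pow_disjoint_pow q q).cycleType_mul, hd.cycleType_mul,
      ihf hf, ihg hg]

end Equiv.Perm

theorem pow_coprime_orderOf_isConj
    {α : Type*} [Fintype α] [DecidableEq α] (y : Equiv.Perm α) (q : ℕ)
    (hq : Nat.Coprime q (orderOf y)) :
    IsConj y (y ^ q) ∧ (y ^ q).cycleType = y.cycleType := by
  have h := y.cycleType_pow_of_coprime hq
  exact ⟨Equiv.Perm.isConj_of_cycleType_eq h.symm, h⟩
end
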